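/- With the Plebański–Demiański setup and nonzero charge Q ≠ 0, a² > l², a² − l² + Q² > 0: if (a² − 2alC + l²)E ≠ aL_z, then ψ evaluated at the ring singularity (r = 0, cosθ = −l/a) is strictly negative. -/

import Mathlib

/-- The function `ψ(r,θ) = Σ (κ − g^{ij} pᵢ pⱼ)` for the asymptotically flat
Plebański–Demiański metric, with `p₀ = −E`, `p₃ = L_z`,
`Σ = r² + (l + a cos θ)²`, `χ = a sin²θ − 2l(cos θ + C)`,
`Δ_r = r² − 2mr + a² − l² + Q²`, `Σ + aχ = r² + a² + l² − 2alC`, and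
separated inverse-metric components `R^{ij}(r)`, `Θ^{ij}(θ)`. -/
noncomputable def PDpsi (m a l C Q E Lz κ r θ : ℝ) : ℝ :=
  (r ^ 2 + (l + a * Real.cos θ) ^ 2) * κ -
    ((-((r ^ 2 + a ^ 2 + l ^ 2 - 2 * a * l * C) ^ 2) * E ^ 2
        + 2 * a * (r ^ 2 + a ^ 2 + l ^ 2 - 2 * a * l * C) * E * Lz
        - a ^ 2 * Lz ^ 2) / (r ^ 2 - 2 * m * r + a ^ 2 - l ^ 2 + Q ^ 2)
      + ((a * Real.sin θ ^ 2 - 2 * l * (Real.cos θ + C)) * E - Lz) ^ 2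
          / Real.sin θ ^ 2)

/-!
At `r = 0` and `cos θ = -l/a` one has `Σ = 0`, `sin²θ = (a² − l²)/a²` and `aχ = a² + l² − 2alC`,
so the radial and angular parts of `ψ` are both multiples of `X² = ((a² − 2alC + l²)E − aL_z)²`:
`ψ = X²/(a² − l² + Q²) − X²/(a² − l²)`, which is negative because `Q² > 0` makes the first
denominator larger.
-/

open Real

theorem sin_sq_eq_of_cos_eq_neg_div {a l θ : ℝ} (ha : a ≠ 0) (hθ : cos θ = -l / a) :
    sin θ ^ 2 = (a ^ 2 - l ^ 2) / a ^ 2 := by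
  rw [sin_sq, hθ]
  field_simp

theorem PDpsi_zero_eq_of_cos_eq_neg_div (m a l C Q E Lz κ θ : ℝ) (ha : a ≠ 0)
    (hθ : cos θ = -l / a) :
    PDpsi m a l C Q E Lz κ 0 θ =
      ((a ^ 2 - 2 * a * l * C + l ^ 2) * E - a * Lz) ^ 2 / (a ^ 2 - l ^ 2 + Q ^ 2) -
        ((a ^ 2 - 2 * a * l * C + l ^ 2) * E - a * Lz) ^ 2 / (a ^ 2 - l ^ 2) := by
  have hχ : (a * sin θ ^ 2 - 2 * l * (cos θ + C)) * E - Lz =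
      ((a ^ 2 - 2 * a * l * C + l ^ 2) * E - a * Lz) / a := by
    rw [sin_sq_eq_of_cos_eq_neg_div ha hθ, hθ]
    field_simp
    ring
  rw [PDpsi, hχ, sin_sq_eq_of_cos_eq_neg_div ha hθ, hθ, div_pow,
    div_div_div_cancel_right₀ (pow_ne_zero 2 ha)]
  field_simp
  ring

theorem PDpsi_neg_at_ring_singularity_general (m a l C Q E Lz κ θ₀ : ℝ)
    (ha : l ^ 2 < a ^ 2) (hQ0 : Q ≠ 0)
    (hθ : Real.cos θ₀ = -l / a)
    (hE : (a ^ 2 - 2 * a * l * C + l ^ 2) * E ≠ a * Lz) :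
    PDpsi m a l C Q E Lz κ 0 θ₀ < 0 := by
  have ha0 : a ≠ 0 := by
    rintro rfl
    nlinarith [sq_nonneg l]
  rw [PDpsi_zero_eq_of_cos_eq_neg_div m a l C Q E Lz κ θ₀ ha0 hθ, sub_neg]
  have hX : 0 < ((a ^ 2 - 2 * a * l * C + l ^ 2) * E - a * Lz) ^ 2 :=
    sq_pos_of_ne_zero (sub_ne_zero.mpr hE)
  exact div_lt_div_of_pos_left hX (by linarith) (by linarith [sq_pos_of_ne_zero hQ0])

/-- Case `Q ≠ 0`: if `(a² − 2alC + l²) E ≠ a L_z` then `ψ` is strictly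
negative at the ring singularity, so causal geodesics avoid it. -/
theorem PDpsi_neg_at_ring_singularity (m a l C Q E Lz κ θ₀ : ℝ)
    (ha : l ^ 2 < a ^ 2) (hQ : 0 < a ^ 2 - l ^ 2 + Q ^ 2) (hQ0 : Q ≠ 0)
    (hθ : Real.cos θ₀ = -l / a)
    (hE : (a ^ 2 - 2 * a * l * C + l ^ 2) * E ≠ a * Lz) :
    PDpsi m a l C Q E Lz κ 0 θ₀ < 0 :=
  PDpsi_neg_at_ring_singularity_general m a l C Q E Lz κ θ₀ ha hQ0 hθ hE
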